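/- arXiv:1402.4379 — 2 statements merged into one kernel-verified Lean document; each statement's English description precedes it below -/
import Mathlib

section
/- Fix z > 0 and α > 0. There exist λ_c ∈ (0, (3/4)α²] and m_c ∈ ℕ such that for every λ ∈ (0, λ_c) and every m ∈ ℤ with |m| ≥ m_c, writing κ = √(α² − λ), one has M(1/2 + |m| + mα/κ, 1 + 2|m|, z) ≥ 1/2. -/
/-!
For `m ≥ 0` the first parameter `a = 1/2 + |m| + mα/κ` is nonnegative, so every term of the series
is nonnegative and `M(a, b, z) ≥ 1`. For `m < 0` and `λ ≤ α²δ/2` the ratio `α/κ` lies in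
`[1, 1 + δ]`, hence `a = 1/2 + |m|(1 - α/κ)` satisfies `|a| ≤ δ b` with `b = 1 + 2|m|` as soon as
`δ|m| ≥ 1/2`.
Since `|(a)ₙ₊₁/(b)ₙ₊₁| ≤ |a|/b` for `|a| ≤ b`, the series then differs from its leading term `1`
by at most `δ (e^z − 1)`, which is at most `1/2` for `δ = e^{-z}/2`.
-/

open scoped Real

noncomputable section

/-- The Pochhammer symbol `(a)ₙ = a (a+1) ⋯ (a+n−1)`. -/
noncomputable def poch (a : ℝ) (n : ℕ) : ℝ := ∏ k ∈ Finset.range n, (a + k)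

/-- The Kummer confluent hypergeometric function `M(a,b,z)`. -/
noncomputable def kummerM (a b z : ℝ) : ℝ :=
  ∑' n : ℕ, (poch a n / poch b n) * z ^ n / (n.factorial : ℝ)

open scoped Nat

theorem poch_zero (a : ℝ) : poch a 0 = 1 := Finset.prod_range_zero _

theorem poch_succ (a : ℝ) (n : ℕ) : poch a (n + 1) = a * poch (a + 1) n := by
  rw [poch, Finset.prod_range_succ', poch, mul_comm, Nat.cast_zero, add_zero]
  exact congrArg _ (Finset.prod_congr rfl fun k _ => by push_cast; ring)

theorem poch_pos {b : ℝ} (hb : 0 < b) (n : ℕ) : 0 < poch b n :=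
  Finset.prod_pos fun _ _ => by positivity

theorem poch_nonneg {a : ℝ} (ha : 0 ≤ a) (n : ℕ) : 0 ≤ poch a n :=
  Finset.prod_nonneg fun _ _ => by positivity

theorem poch_le_poch {a b : ℝ} (ha : 0 ≤ a) (hab : a ≤ b) (n : ℕ) : poch a n ≤ poch b n :=
  Finset.prod_le_prod (fun _ _ => by positivity) fun _ _ => by linarith

theorem abs_poch_le (a : ℝ) (n : ℕ) : |poch a n| ≤ poch |a| n := by
  rw [poch, Finset.abs_prod]
  refine Finset.prod_le_prod (fun _ _ => abs_nonneg _) fun k _ => ?_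
  simpa using abs_add_le a (k : ℝ)

theorem poch_le_pow_mul_poch {a b M : ℝ} (ha : 0 ≤ a) (hM : 1 ≤ M) (hab : a ≤ M * b) (n : ℕ) :
    poch a n ≤ M ^ n * poch b n := by
  rw [show M ^ n * poch b n = ∏ k ∈ Finset.range n, M * (b + k) by
    rw [Finset.prod_mul_distrib, Finset.prod_const, Finset.card_range, poch], poch]
  refine Finset.prod_le_prod (fun _ _ => by positivity) fun k _ => ?_
  nlinarith [(k.cast_nonneg : (0 : ℝ) ≤ k)]

theorem poch_succ_div_le_div {a b : ℝ} (ha : 0 ≤ a) (hab : a ≤ b) (n : ℕ) :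
    poch a (n + 1) / poch b (n + 1) ≤ a / b := by
  rw [poch_succ, poch_succ, mul_div_mul_comm]
  refine mul_le_of_le_one_right (div_nonneg ha (ha.trans hab)) (div_le_one_of_le₀ ?_ ?_)
  · exact poch_le_poch (by linarith) (by linarith) n
  · exact poch_nonneg (by linarith) n

theorem Real.hasSum_pow_succ_div_factorial (x : ℝ) :
    HasSum (fun n : ℕ => x ^ (n + 1) / (n + 1)!) (Real.exp x - 1) := by
  have h := Real.exp_eq_exp_ℝ ▸ NormedSpace.expSeries_div_hasSum_exp x
  simpa using (hasSum_nat_add_iff' 1).2 h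

def kummerTerm (a b z : ℝ) (n : ℕ) : ℝ := poch a n / poch b n * z ^ n / n !

theorem kummerM_eq_tsum (a b z : ℝ) : kummerM a b z = ∑' n, kummerTerm a b z n := rfl

theorem kummerTerm_zero (a b z : ℝ) : kummerTerm a b z 0 = 1 := by
  simp [kummerTerm, poch_zero]

theorem kummerTerm_nonneg {a b z : ℝ} (ha : 0 ≤ a) (hb : 0 < b) (hz : 0 ≤ z) (n : ℕ) :
    0 ≤ kummerTerm a b z n := by
  have := poch_nonneg ha n
  have := poch_pos hb n
  unfold kummerTerm
  positivity

theorem abs_kummerTerm {a b : ℝ} (z : ℝ) (hb : 0 < b) (n : ℕ) :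
    |kummerTerm a b z n| = |poch a n| / poch b n * (|z| ^ n / n !) := by
  rw [kummerTerm, abs_div, abs_mul, abs_div, abs_of_pos (poch_pos hb n), abs_pow, Nat.abs_cast]
  ring

theorem abs_kummerTerm_le {a b M : ℝ} (z : ℝ) (hb : 0 < b) (hM : 1 ≤ M) (hab : |a| ≤ M * b)
    (n : ℕ) : |kummerTerm a b z n| ≤ (M * |z|) ^ n / n ! := by
  have hpoch : |poch a n| / poch b n ≤ M ^ n := by
    rw [div_le_iff₀ (poch_pos hb n)]
    exact (abs_poch_le a n).trans (poch_le_pow_mul_poch (abs_nonneg a) hM hab n)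
  rw [abs_kummerTerm z hb, mul_pow, mul_div_assoc]
  exact mul_le_mul_of_nonneg_right hpoch (by positivity)

theorem summable_kummerTerm (a z : ℝ) {b : ℝ} (hb : 0 < b) : Summable (kummerTerm a b z) := by
  have hab : |a| ≤ max (|a| / b) 1 * b := by
    rw [← div_le_iff₀ hb]
    exact le_max_left _ _
  refine Summable.of_abs (Summable.of_nonneg_of_le (fun _ => abs_nonneg _)
    (abs_kummerTerm_le z hb (le_max_right _ _) hab) (Real.summable_pow_div_factorial _))

theorem kummerM_eq_one_add_tsum (a z : ℝ) {b : ℝ} (hb : 0 < b) :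
    kummerM a b z = 1 + ∑' n, kummerTerm a b z (n + 1) := by
  rw [kummerM_eq_tsum, (summable_kummerTerm a z hb).tsum_eq_zero_add, kummerTerm_zero]

theorem one_le_kummerM {a b z : ℝ} (ha : 0 ≤ a) (hb : 0 < b) (hz : 0 ≤ z) : 1 ≤ kummerM a b z := by
  rw [kummerM_eq_one_add_tsum a z hb]
  exact le_add_of_nonneg_right (tsum_nonneg fun n => kummerTerm_nonneg ha hb hz (n + 1))

theorem abs_kummerTerm_succ_le {a b : ℝ} (z : ℝ) (hb : 0 < b) (hab : |a| ≤ b) (n : ℕ) :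
    |kummerTerm a b z (n + 1)| ≤ |a| / b * (|z| ^ (n + 1) / (n + 1)!) := by
  have hpoch : |poch a (n + 1)| / poch b (n + 1) ≤ |a| / b :=
    (div_le_div_of_nonneg_right (abs_poch_le a _) (poch_pos hb _).le).trans
      (poch_succ_div_le_div (abs_nonneg a) hab n)
  rw [abs_kummerTerm z hb]
  exact mul_le_mul_of_nonneg_right hpoch (by positivity)

theorem abs_kummerM_sub_one_le {a b : ℝ} (z : ℝ) (hb : 0 < b) (hab : |a| ≤ b) :
    |kummerM a b z - 1| ≤ |a| / b * (Real.exp |z| - 1) := by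
  rw [kummerM_eq_one_add_tsum a z hb, add_sub_cancel_left, ← Real.norm_eq_abs]
  exact tsum_of_norm_bounded ((Real.hasSum_pow_succ_div_factorial |z|).mul_left _)
    (abs_kummerTerm_succ_le z hb hab)

theorem one_half_le_kummerM {a b z δ : ℝ} (hb : 0 < b) (hab : |a| ≤ δ * b)
    (hδ : δ * Real.exp |z| ≤ 1 / 2) : 1 / 2 ≤ kummerM a b z := by
  have hδ0 : 0 ≤ δ := nonneg_of_mul_nonneg_left ((abs_nonneg a).trans hab) hb
  have hexp : 1 ≤ Real.exp |z| := Real.one_le_exp (abs_nonneg z)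
  have hratio : |a| / b ≤ δ := (div_le_iff₀ hb).2 hab
  have hclose := abs_kummerM_sub_one_le z hb (hab.trans (by nlinarith))
  have : |a| / b * (Real.exp |z| - 1) ≤ δ * Real.exp |z| := by
    nlinarith [div_nonneg (abs_nonneg a) hb.le]
  linarith [(abs_le.1 hclose).1]

theorem one_le_div_sqrt_sq_sub {α lam : ℝ} (hα : 0 < α) (hlam : 0 ≤ lam) (hlamα : lam < α ^ 2) :
    1 ≤ α / √(α ^ 2 - lam) := by
  rw [one_le_div (Real.sqrt_pos.2 (by linarith))]
  exact (Real.sqrt_le_sqrt (by linarith)).trans_eq (Real.sqrt_sq hα.le)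

theorem div_sqrt_sq_sub_le {α δ lam : ℝ} (hα : 0 < α) (hδ : 0 ≤ δ) (hδ1 : δ ≤ 1)
    (hlamδ : lam ≤ α ^ 2 * δ / 2) : α / √(α ^ 2 - lam) ≤ 1 + δ := by
  have hlamα : lam < α ^ 2 := by nlinarith
  rw [div_le_iff₀ (Real.sqrt_pos.2 (by linarith)), ← div_le_iff₀' (by linarith),
    Real.le_sqrt (by positivity) (by linarith), div_pow, div_le_iff₀ (by positivity)]
  nlinarith [mul_le_mul_of_nonneg_left hδ1 hδ]

theorem abs_half_add_sub_mul_le {N r δ : ℝ} (hN : 1 / 2 ≤ δ * N) (hr1 : 1 ≤ r) (hr : r ≤ 1 + δ) :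
    |1 / 2 + N - N * r| ≤ δ * (1 + 2 * N) := by
  have hδ : 0 ≤ δ := by linarith
  have hN0 : 0 ≤ N := by nlinarith
  rw [abs_le]
  constructor <;> nlinarith [mul_le_mul_of_nonneg_left hr1 hN0, mul_le_mul_of_nonneg_left hr hN0]

theorem stmt5 (z α : ℝ) (hz : 0 < z) (hα : 0 < α) :
    ∃ lamc : ℝ, 0 < lamc ∧ lamc ≤ 3/4 * α^2 ∧ ∃ mc : ℕ,
      ∀ lam : ℝ, 0 < lam → lam < lamc → ∀ m : ℤ, mc ≤ m.natAbs →
        1/2 ≤ kummerM (1/2 + (m.natAbs:ℝ) + (m:ℝ) * α / Real.sqrt (α^2 - lam))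
            (1 + 2 * (m.natAbs:ℝ)) z := by
  set δ := Real.exp (-z) / 2 with hδ
  have hδ0 : 0 < δ := by positivity
  have hδ_le : δ ≤ 1 / 2 := by
    have := Real.exp_le_one_iff.2 (neg_nonpos.2 hz.le)
    linarith
  refine ⟨α ^ 2 * δ / 2, by positivity, by nlinarith [sq_nonneg α], ⌈1 / (2 * δ)⌉₊,
    fun lam hlam hlamc m hm => ?_⟩
  have hb : (0 : ℝ) < 1 + 2 * m.natAbs := by positivity
  rcases le_or_gt 0 m with hm0 | hm0
  · have hm0' : (0 : ℝ) ≤ m := Int.cast_nonneg hm0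
    exact le_trans (by norm_num) (one_le_kummerM (by positivity) hb hz.le)
  · have hmN : (m : ℝ) = -m.natAbs := by
      rw [Nat.cast_natAbs, Int.cast_abs, abs_of_neg (Int.cast_lt_zero.2 hm0), neg_neg]
    have hN : 1 / 2 ≤ δ * m.natAbs := by
      have := (Nat.le_ceil _).trans (Nat.cast_le.2 hm)
      rw [div_le_iff₀ (by positivity)] at this
      linarith
    have hr1 := one_le_div_sqrt_sq_sub hα hlam.le (by nlinarith)
    have hr := div_sqrt_sq_sub_le hα hδ0.le (by linarith) hlamc.le
    refine one_half_le_kummerM (δ := δ) hb ?_ ?_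
    · rw [hmN, show ∀ N x : ℝ, 1 / 2 + N + -N * α / x = 1 / 2 + N - N * (α / x) by
        intros; ring]
      exact abs_half_add_sub_mul_le hN hr1 hr
    · rw [hδ, abs_of_pos hz, div_mul_eq_mul_div, ← Real.exp_add, neg_add_cancel, Real.exp_zero]
end
end

section
/- Let a > 0. There exists a constant C > 0, depending only on a, such that for all b > 1 and z > 0 the function a' ↦ ∫₀^∞ e^{-zt} t^{a'-1}(1+t)^{b-a'-1} dt is differentiable at a' = a, and the absolute value of its derivative there is at most C (2^{b-a-1} + e^z z^{1-b} Γ(b−1)). -/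
/-!
Writing `r = t / (1 + t)`, the integrand is `e^{-zt} r^{a-1} (1+t)^{b-2}`, so its derivative
in `a` is the integrand times `log r`. Since `r^δ |log r| ≤ 1/δ` for `0 < r ≤ 1`, for `a'` near
`a` the derivative is dominated by `4/a` times the integrand at `a/2`, and differentiation under
the integral sign applies. The integral of the integrand at any `c > 0` is split at `t = 1`: on
`(0, 1]` the integrand is at most `2^{b-1} t^{c-1}`, and on `(1, ∞)` at most
`2 e^{-zt} (1+t)^{b-2}`, whose integral is bounded, after the shift `u = 1 + t`, by
`e^z z^{1-b} Γ(b-1)`.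
-/

open scoped Real
open MeasureTheory Set Real

noncomputable def tricomiIntegrand (z b c t : ℝ) : ℝ :=
  exp (-(z * t)) * t ^ (c - 1) * (1 + t) ^ (b - c - 1)

lemma rpow_mul_neg_log_le {r δ : ℝ} (hr : 0 < r) (hδ : 0 < δ) :
    r ^ δ * -log r ≤ 1 / δ := by
  have h := log_le_rpow_div (inv_pos.2 hr).le hδ
  rw [log_inv, inv_rpow hr.le, ← rpow_neg hr.le] at h
  calc r ^ δ * -log r ≤ r ^ δ * (r ^ (-δ) / δ) := by gcongr
    _ = 1 / δ := by rw [mul_div_assoc', ← rpow_add hr]; simp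

lemma setIntegral_Ioi_comp_const_add {E : Type*} [NormedAddCommGroup E] [NormedSpace ℝ E]
    (g : ℝ → E) (d a : ℝ) : ∫ t in Ioi a, g (d + t) = ∫ u in Ioi (d + a), g u := by
  have h := (measurePreserving_add_left volume d).setIntegral_preimage_emb
    (measurableEmbedding_addLeft d) g (Ioi (d + a))
  rwa [preimage_const_add_Ioi, add_sub_cancel_left] at h

lemma integrableOn_Ioi_comp_const_add_iff {E : Type*} [NormedAddCommGroup E]
    (g : ℝ → E) (d a : ℝ) :
    IntegrableOn (fun t => g (d + t)) (Ioi a) ↔ IntegrableOn g (Ioi (d + a)) := by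
  have h := (measurePreserving_add_left volume d).integrableOn_comp_preimage
    (measurableEmbedding_addLeft d) (f := g) (s := Ioi (d + a))
  rwa [preimage_const_add_Ioi, add_sub_cancel_left] at h

lemma exp_neg_mul_mul_one_add_rpow_eq (z s t : ℝ) :
    exp (-(z * t)) * (1 + t) ^ (s - 1) = exp z * ((1 + t) ^ (s - 1) * exp (-(z * (1 + t)))) := by
  have h : exp (-(z * t)) = exp z * exp (-(z * (1 + t))) := by rw [← exp_add]; ring_nf
  rw [h]; ring

section ShiftedGamma

variable {z s : ℝ}

lemma integrableOn_rpow_sub_one_mul_exp_neg_mul (hs : 0 < s) (hz : 0 < z) :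
    IntegrableOn (fun u => u ^ (s - 1) * exp (-(z * u))) (Ioi 0) := by
  simpa using integrableOn_rpow_mul_exp_neg_mul_rpow (by linarith : -1 < s - 1) one_pos hz

lemma integrableOn_exp_neg_mul_mul_one_add_rpow (hs : 0 < s) (hz : 0 < z) :
    IntegrableOn (fun t => exp (-(z * t)) * (1 + t) ^ (s - 1)) (Ioi 0) := by
  simp_rw [exp_neg_mul_mul_one_add_rpow_eq z s]
  refine Integrable.const_mul ?_ _
  refine (integrableOn_Ioi_comp_const_add_iff (fun u => u ^ (s - 1) * exp (-(z * u))) 1 0).2 ?_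
  exact (integrableOn_rpow_sub_one_mul_exp_neg_mul hs hz).mono_set (Ioi_subset_Ioi (by norm_num))

lemma integral_exp_neg_mul_mul_one_add_rpow_le (hs : 0 < s) (hz : 0 < z) :
    ∫ t in Ioi 0, exp (-(z * t)) * (1 + t) ^ (s - 1) ≤ exp z * z ^ (-s) * Gamma s := by
  simp_rw [exp_neg_mul_mul_one_add_rpow_eq z s]
  rw [integral_const_mul, setIntegral_Ioi_comp_const_add (fun u => u ^ (s - 1) * exp (-(z * u))),
    mul_assoc]
  gcongr
  calc ∫ u in Ioi (1 + 0), u ^ (s - 1) * exp (-(z * u))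
      ≤ ∫ u in Ioi 0, u ^ (s - 1) * exp (-(z * u)) :=
        setIntegral_mono_set (integrableOn_rpow_sub_one_mul_exp_neg_mul hs hz)
          (ae_restrict_of_forall_mem measurableSet_Ioi fun u (hu : 0 < u) => by positivity)
          (Ioi_subset_Ioi (by norm_num)).eventuallyLE
    _ = z ^ (-s) * Gamma s := by
        rw [integral_rpow_mul_exp_neg_mul_Ioi hs hz, one_div, inv_rpow hz.le, rpow_neg hz.le]

end ShiftedGamma

section TricomiIntegrand

variable {z b c t : ℝ}

lemma tricomiIntegrand_eq (ht : 0 < t) :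
    tricomiIntegrand z b c t =
      exp (-(z * t)) * (t / (1 + t)) ^ (c - 1) * (1 + t) ^ (b - 2) := by
  have h1t : 0 < 1 + t := by linarith
  rw [tricomiIntegrand, div_rpow ht.le h1t.le, show b - c - 1 = (b - 2) - (c - 1) by ring,
    rpow_sub h1t]
  field_simp

lemma tricomiIntegrand_nonneg (ht : 0 < t) : 0 ≤ tricomiIntegrand z b c t := by
  unfold tricomiIntegrand; positivity

lemma continuousOn_tricomiIntegrand : ContinuousOn (tricomiIntegrand z b c) (Ioi 0) := by
  intro t (ht : 0 < t)
  apply ContinuousAt.continuousWithinAt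
  exact ((continuous_exp.comp (by fun_prop)).continuousAt.mul
    (continuousAt_id.rpow_const (.inl ht.ne'))).mul
    ((continuousAt_const.add continuousAt_id).rpow_const (.inl (add_pos one_pos ht).ne'))

lemma hasDerivAt_tricomiIntegrand (ht : 0 < t) :
    HasDerivAt (tricomiIntegrand z b · t) (tricomiIntegrand z b c t * log (t / (1 + t))) c := by
  have hr : 0 < t / (1 + t) := by positivity
  simp_rw [tricomiIntegrand_eq ht]
  exact ((((hasDerivAt_id' c).sub_const 1).const_rpow hr).const_mul (exp (-(z * t)))).mul_const
    ((1 + t) ^ (b - 2)) |>.congr_deriv (by ring)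

lemma abs_tricomiIntegrand_mul_log_le {c' δ : ℝ} (ht : 0 < t) (hδ : 0 < δ)
    (hc : c + δ ≤ c') :
    |tricomiIntegrand z b c' t * log (t / (1 + t))| ≤ tricomiIntegrand z b c t / δ := by
  set r := t / (1 + t)
  have hr : 0 < r := by positivity
  have hr1 : r ≤ 1 := (div_le_one (by linarith)).2 (by linarith)
  have hlog : log r ≤ 0 := log_nonpos hr.le hr1
  rw [abs_mul, abs_of_nonneg (tricomiIntegrand_nonneg ht), abs_of_nonpos hlog,
    tricomiIntegrand_eq ht, tricomiIntegrand_eq ht]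
  have hpow : r ^ (c' - 1) ≤ r ^ (c - 1) * r ^ δ := by
    rw [← rpow_add hr]; exact rpow_le_rpow_of_exponent_ge hr hr1 (by linarith)
  calc exp (-(z * t)) * r ^ (c' - 1) * (1 + t) ^ (b - 2) * -log r
      ≤ exp (-(z * t)) * (r ^ (c - 1) * r ^ δ) * (1 + t) ^ (b - 2) * -log r := by
        gcongr; linarith
    _ = exp (-(z * t)) * r ^ (c - 1) * (1 + t) ^ (b - 2) * (r ^ δ * -log r) := by ring
    _ ≤ exp (-(z * t)) * r ^ (c - 1) * (1 + t) ^ (b - 2) * (1 / δ) := by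
        gcongr; exact rpow_mul_neg_log_le hr hδ
    _ = _ := by ring

lemma tricomiIntegrand_le_of_le_one (hz : 0 ≤ z) (hb : 1 ≤ b) (hc : 0 ≤ c) (ht : 0 < t)
    (ht1 : t ≤ 1) : tricomiIntegrand z b c t ≤ 2 ^ (b - 1) * t ^ (c - 1) := by
  have hexp : exp (-(z * t)) ≤ 1 := exp_le_one_iff.2 (by nlinarith)
  have hpow : (1 + t) ^ (b - c - 1) ≤ 2 ^ (b - 1) := by
    rcases le_or_gt 0 (b - c - 1) with h | h
    · calc (1 + t) ^ (b - c - 1) ≤ 2 ^ (b - c - 1) := by gcongr; linarith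
        _ ≤ 2 ^ (b - 1) := rpow_le_rpow_of_exponent_le one_le_two (by linarith)
    · calc (1 + t) ^ (b - c - 1) ≤ 1 := rpow_le_one_of_one_le_of_nonpos (by linarith) h.le
        _ ≤ 2 ^ (b - 1) := one_le_rpow one_le_two (by linarith)
  calc tricomiIntegrand z b c t ≤ 1 * t ^ (c - 1) * 2 ^ (b - 1) := by
        unfold tricomiIntegrand; gcongr
    _ = 2 ^ (b - 1) * t ^ (c - 1) := by ring

lemma tricomiIntegrand_le_of_one_le (hc : 0 ≤ c) (ht : 1 ≤ t) :
    tricomiIntegrand z b c t ≤ 2 * (exp (-(z * t)) * (1 + t) ^ (b - 2)) := by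
  have h0 : 0 < t := by linarith
  set r := t / (1 + t)
  have hr : 0 < r := by positivity
  have hr1 : r ≤ 1 := (div_le_one (by linarith)).2 (by linarith)
  have hpow : r ^ (c - 1) ≤ 2 := calc
    r ^ (c - 1) ≤ r ^ (-1 : ℝ) := rpow_le_rpow_of_exponent_ge hr hr1 (by linarith)
    _ = (1 + t) / t := by rw [rpow_neg_one, inv_div]
    _ ≤ 2 := by rw [div_le_iff₀ h0]; linarith
  rw [tricomiIntegrand_eq h0]
  calc exp (-(z * t)) * r ^ (c - 1) * (1 + t) ^ (b - 2)
      ≤ exp (-(z * t)) * 2 * (1 + t) ^ (b - 2) := by gcongr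
    _ = _ := by ring

end TricomiIntegrand

lemma integrableOn_Ioc_rpow_sub_one {c : ℝ} (hc : 0 < c) :
    IntegrableOn (fun t : ℝ => t ^ (c - 1)) (Ioc 0 1) := by
  rw [← intervalIntegrable_iff_integrableOn_Ioc_of_le zero_le_one]
  exact intervalIntegral.intervalIntegrable_rpow' (by linarith)

lemma integral_Ioc_rpow_sub_one {c : ℝ} (hc : 0 < c) :
    ∫ t in Ioc (0 : ℝ) 1, t ^ (c - 1) = 1 / c := by
  rw [← intervalIntegral.integral_of_le zero_le_one, integral_rpow (.inl (by linarith)),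
    sub_add_cancel, one_rpow, zero_rpow hc.ne', sub_zero]

section IntegralBounds

variable {z b c : ℝ}

lemma integrableOn_Ioc_tricomiIntegrand (hz : 0 ≤ z) (hb : 1 ≤ b) (hc : 0 < c) :
    IntegrableOn (tricomiIntegrand z b c) (Ioc 0 1) :=
  Integrable.mono' ((integrableOn_Ioc_rpow_sub_one hc).const_mul _)
    ((continuousOn_tricomiIntegrand.mono Ioc_subset_Ioi_self).aestronglyMeasurable
      measurableSet_Ioc)
    (ae_restrict_of_forall_mem measurableSet_Ioc fun t ht => by
      rw [norm_of_nonneg (tricomiIntegrand_nonneg ht.1)]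
      exact tricomiIntegrand_le_of_le_one hz hb hc.le ht.1 ht.2)

lemma integral_Ioc_tricomiIntegrand_le (hz : 0 ≤ z) (hb : 1 ≤ b) (hc : 0 < c) :
    ∫ t in Ioc 0 1, tricomiIntegrand z b c t ≤ 2 ^ (b - 1) / c := by
  calc ∫ t in Ioc 0 1, tricomiIntegrand z b c t
      ≤ ∫ t in Ioc 0 1, 2 ^ (b - 1) * t ^ (c - 1) :=
        setIntegral_mono_on (integrableOn_Ioc_tricomiIntegrand hz hb hc)
          ((integrableOn_Ioc_rpow_sub_one hc).const_mul _) measurableSet_Ioc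
          fun t ht => tricomiIntegrand_le_of_le_one hz hb hc.le ht.1 ht.2
    _ = 2 ^ (b - 1) / c := by rw [integral_const_mul, integral_Ioc_rpow_sub_one hc, mul_one_div]

lemma integrableOn_Ioi_one_tricomiIntegrand (hz : 0 < z) (hb : 1 < b) (hc : 0 ≤ c) :
    IntegrableOn (tricomiIntegrand z b c) (Ioi 1) := by
  have htail := integrableOn_exp_neg_mul_mul_one_add_rpow (sub_pos.2 hb) hz
  rw [show b - 1 - 1 = b - 2 by ring] at htail
  exact Integrable.mono' ((htail.mono_set (Ioi_subset_Ioi zero_le_one)).const_mul 2)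
    ((continuousOn_tricomiIntegrand.mono (Ioi_subset_Ioi zero_le_one)).aestronglyMeasurable
      measurableSet_Ioi)
    (ae_restrict_of_forall_mem measurableSet_Ioi fun t (ht : 1 < t) => by
      rw [norm_of_nonneg (tricomiIntegrand_nonneg (by linarith))]
      exact tricomiIntegrand_le_of_one_le hc ht.le)

lemma integral_Ioi_one_tricomiIntegrand_le (hz : 0 < z) (hb : 1 < b) (hc : 0 ≤ c) :
    ∫ t in Ioi 1, tricomiIntegrand z b c t ≤ 2 * (exp z * z ^ (1 - b) * Gamma (b - 1)) := by
  have htail := integrableOn_exp_neg_mul_mul_one_add_rpow (sub_pos.2 hb) hz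
  have hbound := integral_exp_neg_mul_mul_one_add_rpow_le (sub_pos.2 hb) hz
  rw [show b - 1 - 1 = b - 2 by ring] at htail hbound
  rw [show -(b - 1) = 1 - b by ring] at hbound
  calc ∫ t in Ioi 1, tricomiIntegrand z b c t
      ≤ ∫ t in Ioi 1, 2 * (exp (-(z * t)) * (1 + t) ^ (b - 2)) :=
        setIntegral_mono_on (integrableOn_Ioi_one_tricomiIntegrand hz hb hc)
          ((htail.mono_set (Ioi_subset_Ioi zero_le_one)).const_mul 2) measurableSet_Ioi
          fun t (ht : 1 < t) => tricomiIntegrand_le_of_one_le hc ht.le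
    _ ≤ 2 * ∫ t in Ioi 0, exp (-(z * t)) * (1 + t) ^ (b - 2) := by
        rw [integral_const_mul]
        gcongr 2 * ?_
        exact setIntegral_mono_set htail (ae_restrict_of_forall_mem measurableSet_Ioi
          fun t (ht : 0 < t) => by positivity) (Ioi_subset_Ioi zero_le_one).eventuallyLE
    _ ≤ 2 * (exp z * z ^ (1 - b) * Gamma (b - 1)) := by gcongr

lemma integrableOn_tricomiIntegrand (hz : 0 < z) (hb : 1 < b) (hc : 0 < c) :
    IntegrableOn (tricomiIntegrand z b c) (Ioi 0) := by
  rw [← Ioc_union_Ioi_eq_Ioi zero_le_one]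
  exact (integrableOn_Ioc_tricomiIntegrand hz.le hb.le hc).union
    (integrableOn_Ioi_one_tricomiIntegrand hz hb hc.le)

lemma integral_tricomiIntegrand_le (hz : 0 < z) (hb : 1 < b) (hc : 0 < c) :
    ∫ t in Ioi 0, tricomiIntegrand z b c t ≤
      2 ^ (b - 1) / c + 2 * (exp z * z ^ (1 - b) * Gamma (b - 1)) := by
  rw [← Ioc_union_Ioi_eq_Ioi zero_le_one, setIntegral_union (Ioc_disjoint_Ioi le_rfl)
    measurableSet_Ioi (integrableOn_Ioc_tricomiIntegrand hz.le hb.le hc)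
    (integrableOn_Ioi_one_tricomiIntegrand hz hb hc.le)]
  exact add_le_add (integral_Ioc_tricomiIntegrand_le hz.le hb.le hc)
    (integral_Ioi_one_tricomiIntegrand_le hz hb hc.le)

end IntegralBounds

section Derivative

variable {z b a : ℝ}

lemma abs_integral_tricomiIntegrand_mul_log_le {c δ : ℝ} (hz : 0 < z) (hb : 1 < b) (hc : 0 < c)
    (hδ : 0 < δ) (hca : c + δ ≤ a) :
    |∫ t in Ioi 0, tricomiIntegrand z b a t * log (t / (1 + t))| ≤
      (∫ t in Ioi 0, tricomiIntegrand z b c t) / δ := by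
  rw [← integral_div]
  exact norm_integral_le_of_norm_le (f := fun t => tricomiIntegrand z b a t * log (t / (1 + t)))
    ((integrableOn_tricomiIntegrand hz hb hc).div_const δ)
    (ae_restrict_of_forall_mem measurableSet_Ioi fun t ht =>
      abs_tricomiIntegrand_mul_log_le ht hδ hca)

lemma hasDerivAt_integral_tricomiIntegrand (hz : 0 < z) (hb : 1 < b) (ha : 0 < a) :
    HasDerivAt (fun c => ∫ t in Ioi 0, tricomiIntegrand z b c t)
      (∫ t in Ioi 0, tricomiIntegrand z b a t * log (t / (1 + t))) a := by
  have hball : ∀ c ∈ Metric.ball a (a / 4), a / 2 + a / 4 ≤ c := fun c hc => by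
    rw [Metric.mem_ball, dist_eq, abs_lt] at hc; linarith [hc.1]
  have hlog : ContinuousOn (fun t : ℝ => log (t / (1 + t))) (Ioi 0) :=
    (continuousOn_id.div (continuousOn_const.add continuousOn_id)
      fun t (ht : 0 < t) => (add_pos one_pos ht).ne').log
      fun t (ht : 0 < t) => (div_pos ht (add_pos one_pos ht)).ne'
  exact (hasDerivAt_integral_of_dominated_loc_of_deriv_le
    (F := fun c t => tricomiIntegrand z b c t)
    (F' := fun c t => tricomiIntegrand z b c t * log (t / (1 + t)))
    (bound := fun t => tricomiIntegrand z b (a / 2) t / (a / 4))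
    (Metric.ball_mem_nhds a (by positivity))
    (.of_forall fun c => continuousOn_tricomiIntegrand.aestronglyMeasurable measurableSet_Ioi)
    (integrableOn_tricomiIntegrand hz hb ha)
    ((continuousOn_tricomiIntegrand.mul hlog).aestronglyMeasurable measurableSet_Ioi)
    (ae_restrict_of_forall_mem measurableSet_Ioi fun t ht c hc =>
      abs_tricomiIntegrand_mul_log_le ht (by positivity) (hball c hc))
    ((integrableOn_tricomiIntegrand hz hb (by positivity)).div_const _)
    (ae_restrict_of_forall_mem measurableSet_Ioi fun t ht c _ =>
      hasDerivAt_tricomiIntegrand ht)).2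

end Derivative

theorem stmt7 (a : ℝ) (ha : 0 < a) :
    ∃ C : ℝ, 0 < C ∧ ∀ b z : ℝ, 1 < b → 0 < z →
      DifferentiableAt ℝ (fun a' : ℝ =>
        ∫ t in Set.Ioi (0:ℝ), Real.exp (-(z*t)) * t ^ (a'-1) * (1+t) ^ (b-a'-1)) a ∧
      |deriv (fun a' : ℝ =>
          ∫ t in Set.Ioi (0:ℝ), Real.exp (-(z*t)) * t ^ (a'-1) * (1+t) ^ (b-a'-1)) a| ≤
        C * ((2:ℝ) ^ (b-a-1) + Real.exp z * z ^ (1-b) * Real.Gamma (b-1)) := by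
  refine ⟨2 / a * (2 ^ (a + 1) / a + 2), by positivity, fun b z hb hz => ?_⟩
  have hderiv := hasDerivAt_integral_tricomiIntegrand hz hb ha
  refine ⟨hderiv.differentiableAt, ?_⟩
  show |deriv (fun c => ∫ t in Ioi 0, tricomiIntegrand z b c t) a| ≤ _
  rw [hderiv.deriv]
  set E := exp z * z ^ (1 - b) * Gamma (b - 1)
  have hE : 0 ≤ E := by have := Gamma_pos_of_pos (sub_pos.2 hb); positivity
  have hpow : (2 : ℝ) ^ (b - 1) = 2 ^ a * 2 ^ (b - a - 1) := by
    rw [← rpow_add two_pos]; ring_nf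
  calc _ ≤ (∫ t in Ioi 0, tricomiIntegrand z b (a / 2) t) / (a / 2) :=
        abs_integral_tricomiIntegrand_mul_log_le hz hb (by positivity) (by positivity) (by linarith)
    _ ≤ (2 ^ (b - 1) / (a / 2) + 2 * E) / (a / 2) := by
        gcongr; exact integral_tricomiIntegrand_le hz hb (by positivity)
    _ = 2 / a * (2 ^ (a + 1) / a * 2 ^ (b - a - 1) + 2 * E) := by
        rw [hpow, rpow_add_one two_ne_zero]; field_simp
    _ ≤ 2 / a * (2 ^ (a + 1) / a + 2) * (2 ^ (b - a - 1) + E) := by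
        have : 0 ≤ 2 / a * (2 * 2 ^ (b - a - 1) + 2 ^ (a + 1) / a * E) := by positivity
        nlinarith
end
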